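/- For every x, y in X and all nonnegative integers n, m, one has Ē(T^n x, T^m y) = Ē(x, y). -/

import Mathlib

open Filter MeasureTheory Topology

noncomputable def EnDist {X : Type*} [MetricSpace X] (T : X → X) (n : ℕ) (x y : X) : ℝ :=
  ⨅ σ : Equiv.Perm (Fin n), (1 / (n : ℝ)) * ∑ k : Fin n, dist (T^[(k : ℕ)] x) (T^[((σ k) : ℕ)] y)

noncomputable def Ebar {X : Type*} [MetricSpace X] (T : X → X) (x y : X) : ℝ :=
  Filter.limsup (fun n => EnDist T n x y) Filter.atTop

/-!
Write `Sₙ(x, y) = n · Eₙ(x, y)` for the minimal cost of matching the orbit segments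
`x, …, Tⁿ⁻¹x` and `y, …, Tⁿ⁻¹y`, where matching `Tⁱx` with `Tʲy` costs `d(Tⁱx, Tʲy)`.
Dropping the first point of the `x`-segment changes the optimal cost only boundedly:
`|Sₙ₊₁(x, y) - Sₙ(Tx, y)| ≤ 2 diam X`. After dividing by `n`, the sequences `Eₙ₊₁(x, y)` and
`Eₙ(Tx, y)` are asymptotic, so `Ē(Tx, y) = Ē(x, y)`. Iterating, and using the symmetry of `Ē`,
gives the theorem.
-/

open Finset Equiv

noncomputable def matchingCost (c : ℕ → ℕ → ℝ) (n : ℕ) : ℝ :=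
  ⨅ σ : Perm (Fin n), ∑ k : Fin n, c k (σ k)

section matchingCost

variable {c : ℕ → ℕ → ℝ} {n : ℕ} {D : ℝ}

lemma matchingCost_le (c : ℕ → ℕ → ℝ) (σ : Perm (Fin n)) :
    matchingCost c n ≤ ∑ k : Fin n, c k (σ k) :=
  ciInf_le (Set.finite_range _).bddBelow σ

lemma exists_matchingCost_eq (c : ℕ → ℕ → ℝ) (n : ℕ) :
    ∃ σ : Perm (Fin n), matchingCost c n = ∑ k : Fin n, c k (σ k) :=
  exists_eq_ciInf_of_finite.imp fun _ h => h.symm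

@[simp]
lemma matchingCost_zero (c : ℕ → ℕ → ℝ) : matchingCost c 0 = 0 := by
  simp [matchingCost]

lemma matchingCost_nonneg (hc : ∀ i j, 0 ≤ c i j) : 0 ≤ matchingCost c n :=
  le_ciInf fun _ => sum_nonneg fun _ _ => hc _ _

lemma matchingCost_le_mul (hc : ∀ i j, c i j ≤ D) : matchingCost c n ≤ n * D :=
  (matchingCost_le c 1).trans <| by
    simpa using sum_le_card_nsmul univ (fun k : Fin n => c k k) D fun _ _ => hc _ _

lemma matchingCost_flip_le (c : ℕ → ℕ → ℝ) (n : ℕ) :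
    matchingCost (flip c) n ≤ matchingCost c n :=
  le_ciInf fun σ => (matchingCost_le _ σ⁻¹).trans_eq <| by
    simpa [flip] using (Equiv.sum_comp σ fun k : Fin n => c (σ⁻¹ k) k).symm

lemma matchingCost_flip (c : ℕ → ℕ → ℝ) (n : ℕ) : matchingCost (flip c) n = matchingCost c n :=
  (matchingCost_flip_le c n).antisymm (matchingCost_flip_le (flip c) n)

/-- Composing with a transposition changes at most two terms of the sum. -/
lemma sum_swap_mul_le (hc₀ : ∀ i j, 0 ≤ c i j) (hc : ∀ i j, c i j ≤ D) (τ : Perm (Fin n))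
    (a b : Fin n) :
    ∑ k : Fin n, c k ((swap a b * τ) k) ≤ ∑ k : Fin n, c k (τ k) + 2 * D := by
  set s : Finset (Fin n) := {τ.symm a, τ.symm b}
  have h_off : ∀ k ∉ s, (swap a b * τ) k = τ k := fun k hk => by
    simp only [s, mem_insert, mem_singleton, not_or] at hk
    exact swap_apply_of_ne_of_ne (fun h => hk.1 (by simp [← h]))
      (fun h => hk.2 (by simp [← h]))
  calc ∑ k : Fin n, c k ((swap a b * τ) k)
      = ∑ k ∈ s, c k ((swap a b * τ) k) + ∑ k ∈ sᶜ, c k (τ k) := by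
        rw [← sum_add_sum_compl s]
        congr 1
        exact sum_congr rfl fun k hk => by rw [h_off k (mem_compl.1 hk)]
    _ ≤ 2 * D + ∑ k : Fin n, c k (τ k) := by
        refine add_le_add ?_ (sum_le_sum_of_subset_of_nonneg (subset_univ sᶜ)
          fun _ _ _ => hc₀ _ _)
        calc ∑ k ∈ s, c k ((swap a b * τ) k) ≤ #s • D := sum_le_card_nsmul _ _ _ fun _ _ => hc _ _
          _ ≤ 2 * D := by
            rw [nsmul_eq_mul]
            gcongr
            · exact (hc₀ 0 0).trans (hc 0 0)
            · exact_mod_cast card_le_two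
    _ = ∑ k : Fin n, c k (τ k) + 2 * D := add_comm _ _


def zeroToLast (σ : Perm (Fin n)) : Perm (Fin (n + 1)) :=
  (finSuccEquiv n).trans ((optionCongr σ).trans finSuccEquivLast.symm)

@[simp]
lemma zeroToLast_zero (σ : Perm (Fin n)) : zeroToLast σ 0 = Fin.last n := by
  simp [zeroToLast, finSuccEquiv_zero]

@[simp]
lemma zeroToLast_succ (σ : Perm (Fin n)) (i : Fin n) :
    zeroToLast σ i.succ = (σ i).castSucc := by
  simp [zeroToLast, finSuccEquiv_succ]

lemma exists_zeroToLast_eq {τ : Perm (Fin (n + 1))} (hτ : τ 0 = Fin.last n) :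
    ∃ σ : Perm (Fin n), zeroToLast σ = τ := by
  have hne : ∀ i : Fin n, τ i.succ ≠ Fin.last n := fun i h =>
    Fin.succ_ne_zero i (τ.injective (h.trans hτ.symm))
  have hinj : Function.Injective fun i : Fin n => (τ i.succ).castPred (hne i) := fun i j h =>
    Fin.succ_injective _ (τ.injective (Fin.castPred_inj.1 h))
  refine ⟨Equiv.ofBijective _ (Finite.injective_iff_bijective.1 hinj), Equiv.ext fun k => ?_⟩
  cases k using Fin.cases with
  | zero => simp [hτ]
  | succ i => simp

lemma sum_zeroToLast (c : ℕ → ℕ → ℝ) (σ : Perm (Fin n)) :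
    ∑ k : Fin (n + 1), c k (zeroToLast σ k) = c 0 n + ∑ k : Fin n, c (k + 1) (σ k) := by
  simp [Fin.sum_univ_succ]

lemma matchingCost_succ_le (hc : ∀ i j, c i j ≤ D) :
    matchingCost c (n + 1) ≤ matchingCost (fun i j => c (i + 1) j) n + D := by
  obtain ⟨σ, hσ⟩ := exists_matchingCost_eq (fun i j => c (i + 1) j) n
  calc matchingCost c (n + 1) ≤ c 0 n + ∑ k : Fin n, c (k + 1) (σ k) :=
        (matchingCost_le c (zeroToLast σ)).trans_eq (sum_zeroToLast c σ)
    _ ≤ matchingCost (fun i j => c (i + 1) j) n + D := by rw [hσ, add_comm]; gcongr; exact hc _ _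

/-- An optimal matching of `Fin (n + 1)` is first moved, at the price of one transposition, to one
sending `0` to `Fin.last n`; deleting that pair leaves a matching for the shifted cost. -/
lemma matchingCost_shift_le (hc₀ : ∀ i j, 0 ≤ c i j) (hc : ∀ i j, c i j ≤ D) :
    matchingCost (fun i j => c (i + 1) j) n ≤ matchingCost c (n + 1) + 2 * D := by
  obtain ⟨τ, hτ⟩ := exists_matchingCost_eq c (n + 1)
  obtain ⟨σ, hσ⟩ := exists_zeroToLast_eq (τ := swap (τ 0) (Fin.last n) * τ) (by simp)
  calc matchingCost (fun i j => c (i + 1) j) n ≤ ∑ k : Fin n, c (k + 1) (σ k) :=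
        matchingCost_le _ σ
    _ ≤ c 0 n + ∑ k : Fin n, c (k + 1) (σ k) := le_add_of_nonneg_left (hc₀ _ _)
    _ = ∑ k : Fin (n + 1), c k ((swap (τ 0) (Fin.last n) * τ) k) := by rw [← hσ, sum_zeroToLast]
    _ ≤ matchingCost c (n + 1) + 2 * D := hτ ▸ sum_swap_mul_le hc₀ hc τ _ _

lemma abs_matchingCost_succ_sub_le (hc₀ : ∀ i j, 0 ≤ c i j) (hc : ∀ i j, c i j ≤ D) :
    |matchingCost c (n + 1) - matchingCost (fun i j => c (i + 1) j) n| ≤ 2 * D := by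
  have hD : 0 ≤ D := (hc₀ 0 0).trans (hc 0 0)
  rw [abs_sub_le_iff]
  constructor
  · linarith [matchingCost_succ_le (n := n) hc]
  · linarith [matchingCost_shift_le (n := n) hc₀ hc]

end matchingCost

lemma limsup_eq_of_tendsto_sub {ι : Type*} {l : Filter ι} [l.NeBot] {u v : ι → ℝ}
    (hv : IsBoundedUnder (· ≤ ·) l v) (hv' : IsBoundedUnder (· ≥ ·) l v)
    (h : Tendsto (u - v) l (𝓝 0)) : limsup u l = limsup v l := by
  have hu : IsBoundedUnder (· ≤ ·) l u := by
    simpa using isBoundedUnder_le_add hv h.isBoundedUnder_le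
  have hu' : IsBoundedUnder (· ≥ ·) l u := by
    simpa using isBoundedUnder_ge_add hv' h.isBoundedUnder_ge
  have h' : Tendsto (v - u) l (𝓝 0) := by simpa [Pi.sub_def] using h.neg
  apply le_antisymm
  · calc limsup u l = limsup (v + (u - v)) l := by rw [add_sub_cancel]
      _ ≤ limsup v l + limsup (u - v) l :=
        limsup_add_le hv' hv h.isBoundedUnder_ge.isCoboundedUnder_le h.isBoundedUnder_le
      _ = limsup v l := by rw [h.limsup_eq, add_zero]
  · calc limsup v l = limsup (u + (v - u)) l := by rw [add_sub_cancel]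
      _ ≤ limsup u l + limsup (v - u) l :=
        limsup_add_le hu' hu h'.isBoundedUnder_ge.isCoboundedUnder_le h'.isBoundedUnder_le
      _ = limsup u l := by rw [h'.limsup_eq, add_zero]

lemma limsup_eq_of_abs_succ_mul_sub_le {f g : ℕ → ℝ} {B C : ℝ} (hg : ∀ n, |g n| ≤ B)
    (h : ∀ n : ℕ, |(n + 1) * f (n + 1) - n * g n| ≤ C) : limsup f atTop = limsup g atTop := by
  rw [← limsup_nat_add f 1]
  have hbound : ∀ n : ℕ, |f (n + 1) - g n| ≤ (C + B) * (1 / ((n : ℝ) + 1)) := fun n => by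
    have hn : (0 : ℝ) < n + 1 := by positivity
    have hdiff : f (n + 1) - g n = (((n + 1) * f (n + 1) - n * g n) - g n) / (n + 1) := by
      field_simp
      ring
    rw [hdiff, abs_div, abs_of_pos hn, mul_one_div]
    gcongr
    exact (abs_sub _ _).trans (add_le_add (h n) (hg n))
  refine limsup_eq_of_tendsto_sub ?_ ?_ ?_
  · exact isBoundedUnder_of ⟨B, fun n => (le_abs_self _).trans (hg n)⟩
  · exact isBoundedUnder_of ⟨-B, fun n => neg_le_of_abs_le (hg n)⟩
  · refine squeeze_zero_norm hbound ?_
    simpa using (tendsto_one_div_add_atTop_nhds_zero_nat (𝕜 := ℝ)).const_mul (C + B)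

section Ebar

variable {X : Type*} [MetricSpace X]

def iterateDist (T : X → X) (x y : X) (i j : ℕ) : ℝ :=
  dist (T^[i] x) (T^[j] y)

lemma iterateDist_succ_left (T : X → X) (x y : X) :
    (fun i j => iterateDist T x y (i + 1) j) = iterateDist T (T x) y := by
  ext i j
  simp [iterateDist]

lemma flip_iterateDist (T : X → X) (x y : X) : flip (iterateDist T x y) = iterateDist T y x := by
  ext i j
  exact dist_comm _ _

lemma EnDist_eq_inv_mul_matchingCost (T : X → X) (n : ℕ) (x y : X) :
    EnDist T n x y = (n : ℝ)⁻¹ * matchingCost (iterateDist T x y) n := by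
  rw [EnDist, matchingCost, Real.mul_iInf_of_nonneg (by positivity), one_div]
  rfl

lemma natCast_mul_EnDist (T : X → X) (n : ℕ) (x y : X) :
    n * EnDist T n x y = matchingCost (iterateDist T x y) n := by
  rcases eq_or_ne n 0 with rfl | hn
  · simp
  · rw [EnDist_eq_inv_mul_matchingCost, mul_inv_cancel_left₀ (Nat.cast_ne_zero.2 hn)]

lemma EnDist_comm (T : X → X) (n : ℕ) (x y : X) : EnDist T n x y = EnDist T n y x := by
  rw [EnDist_eq_inv_mul_matchingCost, EnDist_eq_inv_mul_matchingCost, ← flip_iterateDist,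
    matchingCost_flip]

lemma Ebar_comm (T : X → X) (x y : X) : Ebar T x y = Ebar T y x := by
  simp only [Ebar, EnDist_comm T _ x y]

variable [BoundedSpace X]

lemma iterateDist_le_diam (T : X → X) (x y : X) (i j : ℕ) :
    iterateDist T x y i j ≤ Metric.diam (Set.univ : Set X) :=
  Metric.dist_le_diam_of_mem (Bornology.isBounded_univ.2 ‹_›) trivial trivial

lemma abs_EnDist_le_diam (T : X → X) (n : ℕ) (x y : X) :
    |EnDist T n x y| ≤ Metric.diam (Set.univ : Set X) := by
  rw [EnDist_eq_inv_mul_matchingCost, abs_of_nonneg (mul_nonneg (by positivity)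
    (matchingCost_nonneg (c := iterateDist T x y) fun _ _ => dist_nonneg))]
  rcases eq_or_ne n 0 with rfl | hn
  · simpa using Metric.diam_nonneg
  · calc (n : ℝ)⁻¹ * matchingCost (iterateDist T x y) n
        ≤ (n : ℝ)⁻¹ * (n * Metric.diam (Set.univ : Set X)) := by
          gcongr
          exact matchingCost_le_mul (iterateDist_le_diam T x y)
      _ = Metric.diam (Set.univ : Set X) := inv_mul_cancel_left₀ (Nat.cast_ne_zero.2 hn) _

lemma Ebar_apply_left (T : X → X) (x y : X) : Ebar T (T x) y = Ebar T x y := by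
  refine (limsup_eq_of_abs_succ_mul_sub_le (C := 2 * Metric.diam (Set.univ : Set X))
    (abs_EnDist_le_diam T · (T x) y) fun n => ?_).symm
  rw [← Nat.cast_succ, natCast_mul_EnDist, natCast_mul_EnDist, ← iterateDist_succ_left]
  exact abs_matchingCost_succ_sub_le (fun _ _ => dist_nonneg) (iterateDist_le_diam T x y)

lemma Ebar_iterate_left (T : X → X) (x y : X) (n : ℕ) : Ebar T (T^[n] x) y = Ebar T x y := by
  induction n with
  | zero => rfl
  | succ n ih => rw [Function.iterate_succ_apply', Ebar_apply_left, ih]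

end Ebar

theorem Ebar_iterate_invariant {X : Type*} [MetricSpace X] [CompactSpace X]
    (T : X → X) (x y : X) (n m : ℕ) :
    Ebar T (T^[n] x) (T^[m] y) = Ebar T x y := by
  rw [Ebar_iterate_left, Ebar_comm, Ebar_iterate_left, Ebar_comm]
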